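/- Let T be a circle exchange transformation on ℝ/Lℤ (L > 0 rational) which is a piecewise map whose intervals have rational endpoints and whose shift values are all rational. Then every orbit of T is periodic: for each x there exists n ≥ 1 with T^n(x) = x. -/
import Mathlib

noncomputable def cmod (L x : ℝ) : ℝ := L * Int.fract (x / L)

lemma cmod_mem (L x : ℝ) (hL : 0 < L) : cmod L x ∈ Set.Ico 0 L :=
  ⟨mul_nonneg hL.le (Int.fract_nonneg _), by
    calc L * Int.fract (x / L) < L * 1 :=
          mul_lt_mul_of_pos_left (Int.fract_lt_one _) hL
      _ = L := mul_one L⟩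

lemma cmod_eq (L x : ℝ) (hL : 0 < L) : cmod L x = x - L * ⌊x / L⌋ := by
  unfold cmod Int.fract
  rw [mul_sub, mul_div_cancel₀ _ hL.ne']

lemma rat_mul_int (q : ℚ) (d : ℕ) (hd : q.den ∣ d) (hd0 : 0 < d) :
    ∃ a : ℤ, (q : ℝ) = a / d := by
  obtain ⟨m, hm⟩ := hd
  refine ⟨q.num * m, ?_⟩
  have hden : ((q.den : ℝ)) ≠ 0 := by exact_mod_cast q.den_pos.ne'
  have hm0 : (m : ℝ) ≠ 0 := by
    have : m ≠ 0 := by rintro rfl; simp at hm; omega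
    exact_mod_cast this
  have hq : (q : ℝ) = q.num / q.den := by exact_mod_cast (Rat.num_div_den q).symm
  rw [hq, hm]
  push_cast
  field_simp

lemma exists_interval {n : ℕ} (e : Fin (n + 1) → ℚ) (he0 : e 0 = 0)
    (x : ℝ) (hx0 : 0 ≤ x) (hxL : x < (e (Fin.last n) : ℝ)) :
    ∃ i : Fin n, (e i.castSucc : ℝ) ≤ x ∧ x < (e i.succ : ℝ) := by
  classical
  set S : Finset (Fin (n + 1)) := Finset.univ.filter (fun i => (e i : ℝ) ≤ x) with hS
  have h0S : (0 : Fin (n + 1)) ∈ S := by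
    simp [hS, he0]; exact_mod_cast hx0
  have hSne : S.Nonempty := ⟨0, h0S⟩
  set i0 := S.max' hSne with hi0
  have hi0S : i0 ∈ S := S.max'_mem hSne
  have hi0le : (e i0 : ℝ) ≤ x := by simpa [hS] using hi0S
  have hne : i0 ≠ Fin.last n := by
    rintro h
    rw [h] at hi0le
    exact absurd hxL (not_lt.mpr hi0le)
  have hlt : (i0 : ℕ) < n := by
    have := i0.isLt
    have : (i0 : ℕ) ≠ n := fun h => hne (Fin.ext h)
    omega
  refine ⟨⟨(i0 : ℕ), hlt⟩, ?_, ?_⟩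
  · have : (⟨(i0 : ℕ), hlt⟩ : Fin n).castSucc = i0 := by
      ext; simp
    rw [this]; exact hi0le
  · by_contra h
    push_neg at h
    have hmem : (⟨(i0 : ℕ), hlt⟩ : Fin n).succ ∈ S := by simpa [hS, Fin.succ_mk] using h
    have := S.le_max' _ hmem
    rw [← hi0] at this
    have h2 : i0 < (⟨(i0 : ℕ), hlt⟩ : Fin n).succ := by
      simp [Fin.lt_def]
    exact absurd this (not_le.mpr h2)

/-- A circle exchange transformation on `ℝ/Lℤ` (`L > 0` rational) whose interval endpoints
and shift values are all rational has every orbit periodic.  The circle is `[0, L)`; the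
intervals are `[e i, e (i+1))` with rational endpoints `e 0 = 0 ≤ ⋯ ≤ e n = L`; on the `i`-th
interval `T` acts by `x ↦ x + c i mod L` or `x ↦ c i − x mod L` with `c i` rational, and `T`
is a bijection of the circle. -/
theorem rational_circle_exchange_periodic (L : ℚ) (hL : 0 < L) (n : ℕ)
    (e : Fin (n + 1) → ℚ) (he0 : e 0 = 0) (heL : e (Fin.last n) = L) (hmono : Monotone e)
    (c : Fin n → ℚ) (flip : Fin n → Bool) (T : ℝ → ℝ)
    (hT : ∀ (i : Fin n) (x : ℝ), ((e i.castSucc : ℝ)) ≤ x → x < (e i.succ : ℝ) →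
      T x = if flip i then cmod (L : ℝ) ((c i : ℝ) - x) else cmod (L : ℝ) (x + (c i : ℝ)))
    (hbij : Set.BijOn T (Set.Ico (0 : ℝ) (L : ℝ)) (Set.Ico (0 : ℝ) (L : ℝ))) :
    ∀ x ∈ Set.Ico (0 : ℝ) (L : ℝ), ∃ k : ℕ, 1 ≤ k ∧ T^[k] x = x := by
  intro x hx
  classical
  have hLR : (0 : ℝ) < (L : ℝ) := by exact_mod_cast hL
  set N : ℕ := L.den * ∏ i, (c i).den with hNdef
  have hN0 : 0 < N := Nat.mul_pos L.den_pos (Finset.prod_pos (fun i _ => (c i).den_pos))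
  have hNR : (0 : ℝ) < (N : ℝ) := by exact_mod_cast hN0
  obtain ⟨a, ha⟩ := rat_mul_int L N ⟨∏ i, (c i).den, rfl⟩ hN0
  have hc : ∀ i : Fin n, ∃ b : ℤ, (c i : ℝ) = b / N := fun i =>
    rat_mul_int (c i) N
      (Dvd.dvd.mul_left (Finset.dvd_prod_of_mem _ (Finset.mem_univ i)) _) hN0
  set S : Set ℝ := {y | y ∈ Set.Ico (0 : ℝ) (L : ℝ) ∧ ∃ j : ℤ, y = x + j / N ∨ y = j / N - x}
    with hSdef
  have hxS : x ∈ S := ⟨hx, 0, Or.inl (by simp)⟩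
  -- closure of S under T
  have hTS : ∀ y ∈ S, T y ∈ S := by
    rintro y ⟨hy, j0, hj0⟩
    have hyL : y < (e (Fin.last n) : ℝ) := by rw [heL]; exact hy.2
    obtain ⟨i, hi1, hi2⟩ := exists_interval e he0 y hy.1 hyL
    obtain ⟨b, hb⟩ := hc i
    rw [hT i y hi1 hi2]
    by_cases hfi : flip i = true
    · rw [if_pos hfi]
      refine ⟨cmod_mem _ _ hLR, ?_⟩
      rw [cmod_eq _ _ hLR]
      set m := ⌊((c i : ℝ) - y) / (L : ℝ)⌋ with hm
      rcases hj0 with h | h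
      · exact ⟨b - a * m - j0, Or.inr (by rw [hb, ha, h]; push_cast; field_simp; ring)⟩
      · exact ⟨b - a * m - j0, Or.inl (by rw [hb, ha, h]; push_cast; field_simp; ring)⟩
    · rw [if_neg hfi]
      refine ⟨cmod_mem _ _ hLR, ?_⟩
      rw [cmod_eq _ _ hLR]
      set m := ⌊(y + (c i : ℝ)) / (L : ℝ)⌋ with hm
      rcases hj0 with h | h
      · exact ⟨j0 + b - a * m, Or.inl (by rw [hb, ha, h]; push_cast; field_simp; ring)⟩
      · exact ⟨j0 + b - a * m, Or.inr (by rw [hb, ha, h]; push_cast; field_simp; ring)⟩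
  -- S is finite
  have hfin : S.Finite := by
    set M : ℤ := ⌈(N : ℝ) * (2 * L)⌉ with hM
    have hsub : S ⊆ ((fun j : ℤ => x + j / N) '' (Set.Icc (-M) M)) ∪
        ((fun j : ℤ => j / N - x) '' (Set.Icc (-M) M)) := by
      rintro y ⟨hy, j, hj | hj⟩
      · left
        refine ⟨j, ?_, hj.symm⟩
        have hje : (j : ℝ) = N * (y - x) := by
          rw [hj]; field_simp; ring
        have h1 : (j : ℝ) ≤ (N : ℝ) * (2 * L) := by
          rw [hje]; nlinarith [hy.1, hy.2, hx.1, hx.2]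
        have h2 : -((N : ℝ) * (2 * L)) ≤ (j : ℝ) := by
          rw [hje]; nlinarith [hy.1, hy.2, hx.1, hx.2]
        constructor
        · have : -(M : ℝ) ≤ (j : ℝ) := by
            have := Int.le_ceil ((N : ℝ) * (2 * L))
            push_cast
            linarith
          exact_mod_cast this
        · have : (j : ℝ) ≤ (M : ℝ) := le_trans h1 (Int.le_ceil _)
          exact_mod_cast this
      · right
        refine ⟨j, ?_, hj.symm⟩
        have hje : (j : ℝ) = N * (y + x) := by
          rw [hj]; field_simp; ring
        have h1 : (j : ℝ) ≤ (N : ℝ) * (2 * L) := by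
          rw [hje]; nlinarith [hy.1, hy.2, hx.1, hx.2]
        have h2 : -((N : ℝ) * (2 * L)) ≤ (j : ℝ) := by
          rw [hje]; nlinarith [hy.1, hy.2, hx.1, hx.2]
        constructor
        · have : -(M : ℝ) ≤ (j : ℝ) := by
            have := Int.le_ceil ((N : ℝ) * (2 * L))
            push_cast
            linarith
          exact_mod_cast this
        · have : (j : ℝ) ≤ (M : ℝ) := le_trans h1 (Int.le_ceil _)
          exact_mod_cast this
    exact Set.Finite.subset (((Set.finite_Icc _ _).image _).union ((Set.finite_Icc _ _).image _))
      hsub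
  -- the orbit lies in S
  have horb : ∀ k : ℕ, T^[k] x ∈ S := by
    intro k
    induction k with
    | zero => simpa using hxS
    | succ k ih => rw [Function.iterate_succ_apply']; exact hTS _ ih
  have hIco : ∀ k : ℕ, T^[k] x ∈ Set.Ico (0 : ℝ) (L : ℝ) := fun k => (horb k).1
  -- pigeonhole
  have hrep : ∃ k m : ℕ, k < m ∧ T^[k] x = T^[m] x := by
    haveI := hfin.to_subtype
    obtain ⟨k, m, hne, heq⟩ :=
      Finite.exists_ne_map_eq_of_infinite (fun k : ℕ => (⟨T^[k] x, horb k⟩ : S))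
    rcases hne.lt_or_gt with h | h
    · exact ⟨k, m, h, congrArg Subtype.val heq⟩
    · exact ⟨m, k, h, (congrArg Subtype.val heq).symm⟩
  obtain ⟨k, m, hkm, heq⟩ := hrep
  have cancel : ∀ k, ∀ m : ℕ, k < m → T^[k] x = T^[m] x → T^[m - k] x = x := by
    intro k
    induction k with
    | zero => intro m _ h; simpa using h.symm
    | succ k ih =>
      intro m hkm h
      obtain ⟨m', rfl⟩ : ∃ m', m = m' + 1 := ⟨m - 1, by omega⟩
      rw [Function.iterate_succ_apply', Function.iterate_succ_apply'] at h
      have h2 := hbij.injOn (hIco k) (hIco m') h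
      have := ih m' (by omega) h2
      simpa [Nat.succ_sub_succ] using this
  exact ⟨m - k, by omega, cancel k m hkm heq⟩
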